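/- arXiv:1001.0188 — 2 statements merged into one kernel-verified Lean document; each statement's English description precedes it below -/
import Mathlib

section
/- Bound on the sup-norm estimation error of lasso under a nearly orthogonal design (Theorem 3.2, part 2): Assume β0 and s are defined by the oracle program, 1 ≤ s, s < min(p,n), c > 1, c̄ = (c+1)/(c−1), λ > 0, and λ ≥ c·n·‖S‖_∞. Suppose there is a constant U > 5c̄ such that |(1/n)∑_{i} x_{ij}x_{ik}| ≤ 1/(U·s) for all 1 ≤ j < k ≤ p. Then any lasso estimator β̂ satisfies max_{1≤j≤p}|β̂_j − β0_j| ≤ (λ/n)·(U + c̄)/(U − 5c̄) + min{σ/√n, c_s} + (6c̄/(U − 5c̄))·c_s/√s + (4c̄/U)·(n/λ)·c_s²/s. -/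
open Finset MeasureTheory ProbabilityTheory

noncomputable section

/-- Prediction norm `‖δ‖_{2,n} = ((1/n) ∑_i (x_i'δ)²)^{1/2}`. -/
def predNorm (n p : ℕ) (x : Fin n → Fin p → ℝ) (δ : Fin p → ℝ) : ℝ :=
  Real.sqrt ((n : ℝ)⁻¹ * ∑ i, (∑ j, x i j * δ j) ^ 2)

/-- Least-squares criterion `Q̂(β) = (1/n) ∑_i (y_i - x_i'β)²`. -/
def Qls (n p : ℕ) (x : Fin n → Fin p → ℝ) (y : Fin n → ℝ) (β : Fin p → ℝ) : ℝ :=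
  (n : ℝ)⁻¹ * ∑ i, (y i - ∑ j, x i j * β j) ^ 2

/-- ℓ1-norm on `ℝ^p`. -/
def l1 {p : ℕ} (v : Fin p → ℝ) : ℝ := ∑ j, |v j|

/-- sup-norm (max-absolute-coordinate norm) on `ℝ^p`. -/
def supNorm {p : ℕ} (v : Fin p → ℝ) : ℝ := ⨆ j, |v j|

/-- `restr A δ` is `δ` with coordinates outside `A` set to `0`. -/
def restr {p : ℕ} (A : Finset (Fin p)) (δ : Fin p → ℝ) : Fin p → ℝ :=
  fun j => if j ∈ A then δ j else 0

/-- Support of a vector, as a finset. -/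
def suppF {p : ℕ} (v : Fin p → ℝ) : Finset (Fin p) :=
  Finset.univ.filter (fun j => v j ≠ 0)

/-- Restricted eigenvalue `κ(c̄)`. -/
def kappaRE (n p : ℕ) (x : Fin n → Fin p → ℝ) (T : Finset (Fin p)) (cbar : ℝ) : ℝ :=
  sInf {r : ℝ | ∃ δ : Fin p → ℝ, δ ≠ 0 ∧ l1 (restr Tᶜ δ) ≤ cbar * l1 (restr T δ) ∧
    r = Real.sqrt T.card * predNorm n p x δ / l1 (restr T δ)}

/-- Restricted sparse maximal eigenvalue `φ(m)`. -/
def phiRSE (n p : ℕ) (x : Fin n → Fin p → ℝ) (T : Finset (Fin p)) (m : ℕ) : ℝ :=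
  sSup {r : ℝ | ∃ δ : Fin p → ℝ, δ ≠ 0 ∧ (suppF (restr Tᶜ δ)).card ≤ m ∧
    r = (predNorm n p x δ) ^ 2 / ∑ j, δ j ^ 2}

/-- Restricted sparse minimal eigenvalue `κ̃(m)²`. -/
def kappaTildeSq (n p : ℕ) (x : Fin n → Fin p → ℝ) (T : Finset (Fin p)) (m : ℕ) : ℝ :=
  sInf {r : ℝ | ∃ δ : Fin p → ℝ, δ ≠ 0 ∧ (suppF (restr Tᶜ δ)).card ≤ m ∧
    r = (predNorm n p x δ) ^ 2 / ∑ j, δ j ^ 2}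

/-- The condition number `μ(m) = √φ(m)/κ̃(m)`. -/
def muCond (n p : ℕ) (x : Fin n → Fin p → ℝ) (T : Finset (Fin p)) (m : ℕ) : ℝ :=
  Real.sqrt (phiRSE n p x T m) / Real.sqrt (kappaTildeSq n p x T m)

/-!
Write `δ = β̂ - β0`, `r = f - X β0` and `a_j = (1/n) ∑ᵢ rᵢ xᵢⱼ`. Optimality of the lasso along
coordinate `j` gives `|(1/n) ∑ᵢ (y - X β̂)ᵢ xᵢⱼ| ≤ λ/(2n)`. Since `y - X β̂ = ε + r - X δ` and the
Gram matrix is the identity up to off-diagonal entries of size `1/(U s)`, this yields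
`|δ_j| ≤ λ/(2n) + λ/(2cn) + |a_j| + ‖δ‖₁/(U s)`.
The oracle program forces `a_j = 0` on `supp β0` and `|a_j| ≤ σ/√n`: one more coordinate lowers
`c_k²` by `a_j²` and costs `σ²/n`; Cauchy–Schwarz gives `|a_j| ≤ c_s`. Summing the coordinate
bound over `supp β0` and combining it with the cone condition
`‖δ_{Tᶜ}‖₁ ≤ c̄ ‖δ_T‖₁ + c n c_s² / (λ (c - 1))` of the basic inequality bounds `‖δ‖₁`, hence
every `|δ_j|`; the term in `c_s/√s` is not needed.
-/

open Matrix

lemma abs_le_supNorm {p : ℕ} (v : Fin p → ℝ) (j : Fin p) : |v j| ≤ supNorm v :=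
  le_ciSup (Set.finite_range fun k => |v k|).bddAbove j

section Empirical

variable {n p : ℕ}

def meanSq (w : Fin n → ℝ) : ℝ := (n : ℝ)⁻¹ * ∑ i, w i ^ 2

def empCorr (x : Matrix (Fin n) (Fin p) ℝ) (w : Fin n → ℝ) : Fin p → ℝ :=
  (n : ℝ)⁻¹ • (w ᵥ* x)

def empGram (x : Matrix (Fin n) (Fin p) ℝ) : Matrix (Fin p) (Fin p) ℝ :=
  (n : ℝ)⁻¹ • (xᵀ * x)

lemma meanSq_nonneg (w : Fin n → ℝ) : 0 ≤ meanSq w := by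
  unfold meanSq; positivity

lemma meanSq_smul (t : ℝ) (w : Fin n → ℝ) : meanSq (t • w) = t ^ 2 * meanSq w := by
  simp only [meanSq, Pi.smul_apply, smul_eq_mul, mul_pow, ← mul_sum]
  ring

lemma meanSq_sub (u v : Fin n → ℝ) :
    meanSq (u - v) = meanSq u - 2 * ((n : ℝ)⁻¹ * (u ⬝ᵥ v)) + meanSq v := by
  simp only [meanSq, dotProduct, Pi.sub_apply, sub_sq, sum_add_distrib,
    sum_sub_distrib, mul_assoc, ← mul_sum]
  ring

lemma abs_mean_dotProduct_le (u v : Fin n → ℝ) :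
    |(n : ℝ)⁻¹ * (u ⬝ᵥ v)| ≤ √(meanSq u) * √(meanSq v) := by
  have hn : (0 : ℝ) ≤ (n : ℝ)⁻¹ := by positivity
  rw [abs_mul, abs_of_nonneg hn, meanSq, meanSq, Real.sqrt_mul hn, Real.sqrt_mul hn,
    mul_mul_mul_comm, Real.mul_self_sqrt hn]
  gcongr
  rw [dotProduct, abs_le]
  constructor
  · have := Real.sum_mul_le_sqrt_mul_sqrt univ (-u) v
    simp only [Pi.neg_apply, neg_mul, sum_neg_distrib, neg_sq] at this
    linarith
  · exact Real.sum_mul_le_sqrt_mul_sqrt univ u v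

variable (x : Matrix (Fin n) (Fin p) ℝ)

lemma Qls_eq_meanSq (w : Fin n → ℝ) (β : Fin p → ℝ) :
    Qls n p x w β = meanSq (w - x *ᵥ β) :=
  rfl

lemma Qls_nonneg (w : Fin n → ℝ) (β : Fin p → ℝ) : 0 ≤ Qls n p x w β :=
  meanSq_nonneg _

lemma empCorr_sub (u v : Fin n → ℝ) : empCorr x (u - v) = empCorr x u - empCorr x v := by
  simp only [empCorr, sub_vecMul, smul_sub]

lemma empCorr_add (u v : Fin n → ℝ) : empCorr x (u + v) = empCorr x u + empCorr x v := by
  simp only [empCorr, add_vecMul, smul_add]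

lemma empCorr_dotProduct (u : Fin n → ℝ) (d : Fin p → ℝ) :
    empCorr x u ⬝ᵥ d = (n : ℝ)⁻¹ * (u ⬝ᵥ x *ᵥ d) := by
  rw [empCorr, smul_dotProduct, dotProduct_mulVec, smul_eq_mul]

lemma empCorr_mulVec (d : Fin p → ℝ) : empCorr x (x *ᵥ d) = empGram x *ᵥ d := by
  rw [empCorr, empGram, smul_mulVec, ← mulVec_mulVec, mulVec_transpose]

lemma empGram_apply (j k : Fin p) : empGram x j k = (n : ℝ)⁻¹ * ∑ i, x i j * x i k := by
  simp [empGram, mul_apply]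

lemma empGram_apply_self (j : Fin p) : empGram x j j = meanSq (xᵀ j) := by
  simp [empGram_apply, meanSq, sq]

lemma empGram_comm (j k : Fin p) : empGram x j k = empGram x k j := by
  simp only [empGram_apply, mul_comm]

lemma abs_empGram_le_of_forall_lt {ρ : ℝ} (h : ∀ j k, j < k → |empGram x j k| ≤ ρ)
    (j k : Fin p) (hjk : j ≠ k) : |empGram x j k| ≤ ρ := by
  rcases hjk.lt_or_gt with hlt | hgt
  · exact h j k hlt
  · rw [empGram_comm]; exact h k j hgt

lemma abs_empCorr_le_of_supNorm_le {c lam : ℝ} (hc : 0 < c) (hn : 0 < n) (w : Fin n → ℝ)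
    (h : c * n * supNorm ((2 : ℝ) • empCorr x w) ≤ lam) (j : Fin p) :
    |empCorr x w j| ≤ lam / (2 * c * n) := by
  have hj := abs_le_supNorm ((2 : ℝ) • empCorr x w) j
  rw [Pi.smul_apply, smul_eq_mul, abs_mul, abs_two] at hj
  rw [le_div_iff₀ (by positivity)]
  nlinarith [mul_le_mul_of_nonneg_left hj (by positivity : (0 : ℝ) ≤ c * n)]

lemma abs_empCorr_le {j : Fin p} (hxj : meanSq (xᵀ j) = 1) (w : Fin n → ℝ) :
    |empCorr x w j| ≤ √(meanSq w) := by
  calc |empCorr x w j| = |(n : ℝ)⁻¹ * (w ⬝ᵥ xᵀ j)| := rfl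
    _ ≤ √(meanSq w) * √(meanSq (xᵀ j)) := abs_mean_dotProduct_le _ _
    _ = √(meanSq w) := by rw [hxj, Real.sqrt_one, mul_one]

lemma Qls_add (w : Fin n → ℝ) (β d : Fin p → ℝ) :
    Qls n p x w (β + d) =
      Qls n p x w β - 2 * (empCorr x (w - x *ᵥ β) ⬝ᵥ d) + meanSq (x *ᵥ d) := by
  rw [Qls_eq_meanSq, Qls_eq_meanSq, mulVec_add, ← sub_sub, meanSq_sub, empCorr_dotProduct]

lemma Qls_add_single {j : Fin p} (hxj : meanSq (xᵀ j) = 1)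
    (w : Fin n → ℝ) (β : Fin p → ℝ) (t : ℝ) :
    Qls n p x w (β + Pi.single j t) =
      Qls n p x w β - 2 * t * empCorr x (w - x *ᵥ β) j + t ^ 2 := by
  have hcol : x *ᵥ Pi.single j t = t • xᵀ j := by
    ext i; simp [mul_comm]
  rw [Qls_add, hcol, meanSq_smul, hxj, dotProduct_single]
  ring

end Empirical

lemma abs_mulVec_sub_le {p : ℕ} (G : Matrix (Fin p) (Fin p) ℝ) {j : Fin p} {ρ : ℝ}
    (hρ : 0 ≤ ρ) (hdiag : G j j = 1) (hoff : ∀ k, k ≠ j → |G j k| ≤ ρ)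
    (d : Fin p → ℝ) :
    |(G *ᵥ d) j - d j| ≤ ρ * l1 d := by
  have hsplit : (G *ᵥ d) j - d j = ∑ k ∈ univ.erase j, G j k * d k := by
    rw [mulVec, dotProduct, ← add_sum_erase _ _ (mem_univ j), hdiag, one_mul, add_sub_cancel_left]
  rw [hsplit, l1, mul_sum]
  calc |∑ k ∈ univ.erase j, G j k * d k| ≤ ∑ k ∈ univ.erase j, |G j k| * |d k| := by
        simpa only [abs_mul] using abs_sum_le_sum_abs (fun k => G j k * d k) (univ.erase j)
    _ ≤ ∑ k ∈ univ.erase j, ρ * |d k| :=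
        sum_le_sum fun k hk => by gcongr; exact hoff k (ne_of_mem_erase hk)
    _ ≤ ∑ k, ρ * |d k| :=
        sum_le_sum_of_subset_of_nonneg (subset_univ _) fun _ _ _ => by positivity

lemma suppF_add_single_subset {p : ℕ} (β : Fin p → ℝ) (j : Fin p) (t : ℝ) :
    suppF (β + Pi.single j t) ⊆ insert j (suppF β) := by
  intro k hk
  by_cases hkj : k = j
  · simp [hkj]
  · simp_all [suppF]

lemma l1_add_single_le {p : ℕ} (β : Fin p → ℝ) (j : Fin p) (t : ℝ) :
    l1 (β + Pi.single j t) ≤ l1 β + |t| := by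
  calc l1 (β + Pi.single j t) ≤ l1 β + l1 (Pi.single j t) := by
        rw [l1, l1, l1, ← sum_add_distrib]
        exact sum_le_sum fun k _ => abs_add_le _ _
    _ = l1 β + |t| := by simp [l1, Pi.single_apply, apply_ite]

lemma sum_compl_sub_sum_le_l1_sub {p : ℕ} {T : Finset (Fin p)} {β0 : Fin p → ℝ}
    (hβ0 : ∀ j ∉ T, β0 j = 0) (β : Fin p → ℝ) :
    ∑ j ∈ Tᶜ, |β j - β0 j| - ∑ j ∈ T, |β j - β0 j| ≤ l1 β - l1 β0 := by
  have hβ : l1 β = ∑ j ∈ T, |β j| + ∑ j ∈ Tᶜ, |β j - β0 j| := by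
    rw [l1, ← sum_add_sum_compl T]
    congr 1
    exact sum_congr rfl fun j hj => by rw [hβ0 j (mem_compl.mp hj), sub_zero]
  have hβ0' : l1 β0 = ∑ j ∈ T, |β0 j| := by
    rw [l1, ← sum_add_sum_compl T, add_eq_left]
    exact sum_eq_zero fun j hj => by rw [hβ0 j (mem_compl.mp hj), abs_zero]
  have hT : ∑ j ∈ T, |β0 j| - ∑ j ∈ T, |β j| ≤ ∑ j ∈ T, |β j - β0 j| := by
    rw [← sum_sub_distrib]
    exact sum_le_sum fun j _ => by rw [abs_sub_comm]; exact abs_sub_abs_le_abs_sub _ _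
  linarith

lemma abs_le_half_of_forall_mul_le {g L : ℝ} (h : ∀ t : ℝ, 2 * t * g ≤ t ^ 2 + L * |t|) :
    |g| ≤ L / 2 := by
  rw [abs_le]
  constructor
  · by_contra! hg
    have ht := h (g + L / 2)
    rw [abs_of_neg (by linarith)] at ht
    nlinarith
  · by_contra! hg
    have ht := h (g - L / 2)
    rw [abs_of_pos (by linarith)] at ht
    nlinarith

lemma abs_dotProduct_le {p : ℕ} {g : Fin p → ℝ} {M : ℝ} (hg : ∀ k, |g k| ≤ M)
    (d : Fin p → ℝ) :
    |g ⬝ᵥ d| ≤ M * l1 d := by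
  rw [dotProduct, l1, mul_sum]
  refine (abs_sum_le_sum_abs _ _).trans (sum_le_sum fun k _ => ?_)
  rw [abs_mul]
  exact mul_le_mul_of_nonneg_right (hg k) (abs_nonneg _)

lemma one_lt_add_one_div_sub_one {c : ℝ} (hc : 1 < c) : 1 < (c + 1) / (c - 1) := by
  rw [lt_div_iff₀ (by linarith)]; linarith

lemma mul_add_le_of_cone {A B L K cbar U : ℝ} (hA : A ≤ L + (A + B) / U)
    (hB : B ≤ cbar * A + K) (hcbar : 0 ≤ cbar) (hU : 1 + cbar < U) :
    (U - 1 - cbar) * (A + B) ≤ U * ((1 + cbar) * L + K) := by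
  have hU0 : 0 < U := by linarith
  have hUA : U * A ≤ U * L + (A + B) := by
    have := mul_le_mul_of_nonneg_left hA hU0.le
    rwa [mul_add, mul_div_cancel₀ _ hU0.ne'] at this
  nlinarith [mul_le_mul_of_nonneg_left hUA (by linarith : (0 : ℝ) ≤ 1 + cbar)]

lemma lasso_coord_bound_arith {c cbar U s lam n Q D : ℝ} (hc : 1 < c)
    (hcbar : cbar = (c + 1) / (c - 1)) (hU : 5 * cbar < U) (hs : 0 < s) (hlam : 0 < lam)
    (hn : 0 < n) (hQ : 0 ≤ Q)
    (hD : (U - 1 - cbar) * D ≤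
      U * ((1 + cbar) * (s * (lam / (2 * n) + lam / (2 * c * n))) + c * n * Q / (lam * (c - 1)))) :
    lam / (2 * n) + lam / (2 * c * n) + D / (U * s) ≤
      lam / n * ((U + cbar) / (U - 5 * cbar)) + 4 * cbar / U * (n / lam) * (Q / s) := by
  set L := lam / (2 * n) + lam / (2 * c * n)
  have hc1 : 0 < c - 1 := by linarith
  have hcbar1 : 1 < cbar := hcbar ▸ one_lt_add_one_div_sub_one hc
  have hU0 : 0 < U := by linarith
  have hU1 : 0 < U - 1 - cbar := by linarith
  have hU5 : 0 < U - 5 * cbar := by linarith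
  have hDdiv : D / (U * s) ≤
      (1 + cbar) * L / (U - 1 - cbar) + c / ((c - 1) * (U - 1 - cbar)) * (n / lam * (Q / s)) := by
    rw [div_le_iff₀ (by positivity)]
    have e : ((1 + cbar) * L / (U - 1 - cbar) +
        c / ((c - 1) * (U - 1 - cbar)) * (n / lam * (Q / s))) * (U * s) =
        U * ((1 + cbar) * (s * L) + c * n * Q / (lam * (c - 1))) / (U - 1 - cbar) := by
      field_simp
    rw [e, le_div_iff₀ hU1]
    linarith
  have hL : L ≤ lam / n := by
    have : L = lam / n * ((c + 1) / (2 * c)) := by simp only [L]; field_simp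
    rw [this]
    exact mul_le_of_le_one_right (by positivity) (by rw [div_le_one (by positivity)]; linarith)
  have hUfrac : U / (U - 1 - cbar) ≤ (U + cbar) / (U - 5 * cbar) := by
    rw [div_le_div_iff₀ hU1 hU5]
    nlinarith
  have hLpart :
      L + (1 + cbar) * L / (U - 1 - cbar) ≤ lam / n * ((U + cbar) / (U - 5 * cbar)) := by
    have e : L + (1 + cbar) * L / (U - 1 - cbar) = L * (U / (U - 1 - cbar)) := by
      field_simp; ring
    rw [e]
    exact mul_le_mul hL hUfrac (by positivity) (by positivity)
  have hKpart : c / ((c - 1) * (U - 1 - cbar)) ≤ 4 * cbar / U := by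
    have hcbc : cbar * (c - 1) = c + 1 := by rw [hcbar]; field_simp
    have h35 : 3 * U / 5 ≤ U - 1 - cbar := by linarith
    rw [div_le_div_iff₀ (by positivity) hU0]
    calc c * U ≤ 4 * (c + 1) * (U - 1 - cbar) := by
          nlinarith [mul_le_mul_of_nonneg_left h35 (by linarith : (0 : ℝ) ≤ 4 * (c + 1))]
      _ = 4 * cbar * ((c - 1) * (U - 1 - cbar)) := by rw [← hcbc]; ring
  have hKpart' := mul_le_mul_of_nonneg_right hKpart (by positivity : 0 ≤ n / lam * (Q / s))
  rw [mul_assoc (4 * cbar / U)]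
  linarith

section Lasso

variable {n p : ℕ} (x : Matrix (Fin n) (Fin p) ℝ)

def IsLassoMin (y : Fin n → ℝ) (lam : ℝ) (βhat : Fin p → ℝ) : Prop :=
  ∀ β, Qls n p x y βhat + lam / n * l1 βhat ≤ Qls n p x y β + lam / n * l1 β

variable {x} {y : Fin n → ℝ} {lam : ℝ} {βhat : Fin p → ℝ}

lemma IsLassoMin.abs_empCorr_resid_le (h : IsLassoMin x y lam βhat) (hlam : 0 ≤ lam)
    {j : Fin p} (hxj : meanSq (xᵀ j) = 1) :
    |empCorr x (y - x *ᵥ βhat) j| ≤ lam / (2 * n) := by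
  have hperturb :
      ∀ t : ℝ, 2 * t * empCorr x (y - x *ᵥ βhat) j ≤ t ^ 2 + lam / n * |t| := by
    intro t
    have hmin := h (βhat + Pi.single j t)
    have hl1 := mul_le_mul_of_nonneg_left (l1_add_single_le βhat j t)
      (by positivity : 0 ≤ lam / n)
    rw [Qls_add_single x hxj] at hmin
    linarith
  simpa only [div_div, mul_comm (n : ℝ)] using abs_le_half_of_forall_mul_le hperturb

lemma IsLassoMin.l1_sub_le (h : IsLassoMin x y lam βhat) (f : Fin n → ℝ) (β0 : Fin p → ℝ)
    {M : ℝ} (hnoise : ∀ j, |empCorr x (y - f) j| ≤ M) :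
    lam / n * (l1 βhat - l1 β0) ≤ 2 * M * l1 (βhat - β0) + Qls n p x f β0 := by
  set δ := βhat - β0
  have hQ : Qls n p x y βhat = Qls n p x y β0 - 2 * (empCorr x (y - f) ⬝ᵥ δ)
      - 2 * (empCorr x (f - x *ᵥ β0) ⬝ᵥ δ) + meanSq (x *ᵥ δ) := by
    rw [show βhat = β0 + δ by simp [δ], Qls_add, ← sub_add_sub_cancel y f, empCorr_add,
      add_dotProduct]
    ring
  have hnoise' := abs_dotProduct_le hnoise δ
  have happrox : |empCorr x (f - x *ᵥ β0) ⬝ᵥ δ| ≤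
      √(Qls n p x f β0) * √(meanSq (x *ᵥ δ)) := by
    rw [empCorr_dotProduct]; exact abs_mean_dotProduct_le _ _
  have hamgm := two_mul_le_add_sq (√(Qls n p x f β0)) (√(meanSq (x *ᵥ δ)))
  rw [Real.sq_sqrt (Qls_nonneg x f β0), Real.sq_sqrt (meanSq_nonneg _)] at hamgm
  have hmin := h β0
  rw [abs_le] at hnoise' happrox
  nlinarith

lemma IsLassoMin.abs_sub_le (h : IsLassoMin x y lam βhat) (hlam : 0 ≤ lam)
    (hx : ∀ j, meanSq (xᵀ j) = 1) (f : Fin n → ℝ) (β0 : Fin p → ℝ) {M ρ : ℝ}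
    (hnoise : ∀ j, |empCorr x (y - f) j| ≤ M) (hρ : 0 ≤ ρ)
    (horth : ∀ j k, j ≠ k → |empGram x j k| ≤ ρ) (j : Fin p) :
    |βhat j - β0 j| ≤
      lam / (2 * n) + M + |empCorr x (f - x *ᵥ β0) j| + ρ * l1 (βhat - β0) := by
  set δ := βhat - β0
  have hfit : x *ᵥ δ = (y - f) + (f - x *ᵥ β0) - (y - x *ᵥ βhat) := by
    rw [mulVec_sub]; abel
  have hG : (empGram x *ᵥ δ) j =
      empCorr x (y - f) j + empCorr x (f - x *ᵥ β0) j - empCorr x (y - x *ᵥ βhat) j := by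
    rw [← empCorr_mulVec, hfit, empCorr_sub, empCorr_add]; rfl
  have hoff := abs_mulVec_sub_le (empGram x) hρ ((empGram_apply_self x j).trans (hx j))
    (fun k hk => horth j k (Ne.symm hk)) δ
  have hkkt := h.abs_empCorr_resid_le hlam (hx j)
  have hnoisej := hnoise j
  rw [hG] at hoff
  rw [abs_le] at hoff hkkt hnoisej ⊢
  constructor <;> linarith [le_abs_self (empCorr x (f - x *ᵥ β0) j),
    neg_abs_le (empCorr x (f - x *ᵥ β0) j), show δ j = βhat j - β0 j from rfl]

lemma IsLassoMin.sum_compl_le (h : IsLassoMin x y lam βhat) (hn : 0 < n) (hlam : 0 < lam)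
    {c : ℝ} (hc : 1 < c) (f : Fin n → ℝ) {T : Finset (Fin p)} {β0 : Fin p → ℝ}
    (hβ0 : ∀ j ∉ T, β0 j = 0) (hnoise : ∀ j, |empCorr x (y - f) j| ≤ lam / (2 * c * n)) :
    ∑ j ∈ Tᶜ, |βhat j - β0 j| ≤
      (c + 1) / (c - 1) * ∑ j ∈ T, |βhat j - β0 j| +
        c * n * Qls n p x f β0 / (lam * (c - 1)) := by
  set A := ∑ j ∈ T, |βhat j - β0 j|
  set B := ∑ j ∈ Tᶜ, |βhat j - β0 j|
  have hc1 : 0 < c - 1 := by linarith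
  have hbasic := h.l1_sub_le f β0 hnoise
  have hsupp := sum_compl_sub_sum_le_l1_sub hβ0 βhat
  have hl1 : l1 (βhat - β0) = A + B := (sum_add_sum_compl T _).symm
  have hcomb : lam / n * (B - A) ≤ lam / n / c * (A + B) + Qls n p x f β0 := by
    have e : 2 * (lam / (2 * c * n)) = lam / n / c := by field_simp
    rw [hl1, e] at hbasic
    nlinarith [mul_le_mul_of_nonneg_left hsupp (by positivity : 0 ≤ lam / n)]
  have hscaled := mul_le_mul_of_nonneg_left hcomb (by positivity : 0 ≤ c * n / lam)
  have e1 : c * n / lam * (lam / n * (B - A)) = c * (B - A) := by field_simp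
  have e2 : c * n / lam * (lam / n / c * (A + B) + Qls n p x f β0) =
      A + B + c * n * Qls n p x f β0 / lam := by field_simp
  rw [e1, e2] at hscaled
  calc B = (c - 1) * B / (c - 1) := by field_simp
    _ ≤ ((c + 1) * A + c * n * Qls n p x f β0 / lam) / (c - 1) := by gcongr; linarith
    _ = _ := by field_simp

theorem IsLassoMin.abs_sub_le_of_nearlyOrthogonal (h : IsLassoMin x y lam βhat) (hn : 0 < n)
    (hlam : 0 < lam) (hx : ∀ j, meanSq (xᵀ j) = 1) {c cbar U : ℝ} (hc : 1 < c)
    (hcbar : cbar = (c + 1) / (c - 1)) (f : Fin n → ℝ)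
    (hnoise : ∀ j, |empCorr x (y - f) j| ≤ lam / (2 * c * n)) {T : Finset (Fin p)} {s : ℕ}
    {β0 : Fin p → ℝ} (hβ0 : ∀ j ∉ T, β0 j = 0) (hTs : T.card ≤ s)
    (hcorrT : ∀ j ∈ T, empCorr x (f - x *ᵥ β0) j = 0) (hs : 0 < s) (hU : 5 * cbar < U)
    (horth : ∀ j k, j < k → |empGram x j k| ≤ 1 / (U * s)) (j : Fin p) :
    |βhat j - β0 j| ≤ lam / n * ((U + cbar) / (U - 5 * cbar)) + |empCorr x (f - x *ᵥ β0) j| +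
      4 * cbar / U * (n / lam) * (Qls n p x f β0 / s) := by
  have hn' : (0 : ℝ) < n := Nat.cast_pos.mpr hn
  have hs' : (0 : ℝ) < s := Nat.cast_pos.mpr hs
  have hcbar1 : 1 < cbar := hcbar ▸ one_lt_add_one_div_sub_one hc
  have hU0 : 0 < U := by linarith
  set L := lam / (2 * n) + lam / (2 * c * n)
  set A := ∑ j ∈ T, |βhat j - β0 j|
  set B := ∑ j ∈ Tᶜ, |βhat j - β0 j|
  have hl1 : l1 (βhat - β0) = A + B := (sum_add_sum_compl T _).symm
  have hcoord := h.abs_sub_le hlam.le hx f β0 hnoise (by positivity)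
    (abs_empGram_le_of_forall_lt x horth)
  have hA : A ≤ s * L + (A + B) / U :=
    calc A ≤ ∑ _j ∈ T, (L + 1 / (U * s) * (A + B)) := sum_le_sum fun j hj => by
          simpa [hcorrT j hj, hl1] using hcoord j
      _ ≤ s * (L + 1 / (U * s) * (A + B)) := by
          rw [sum_const, nsmul_eq_mul]; gcongr
      _ = s * L + (A + B) / U := by field_simp
  have hB := h.sum_compl_le hn hlam hc f hβ0 hnoise
  rw [← hcbar] at hB
  have hfinal := lasso_coord_bound_arith hc hcbar hU hs' hlam hn' (Qls_nonneg x f β0)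
    (mul_add_le_of_cone hA hB (by linarith) (by linarith))
  have := hcoord j
  rw [hl1, one_div_mul_eq_div] at this
  linarith

end Lasso

section Oracle

variable {n p : ℕ} (x : Matrix (Fin n) (Fin p) ℝ) (f : Fin n → ℝ)

lemma Qls_add_single_empCorr {j : Fin p} (hxj : meanSq (xᵀ j) = 1) (β : Fin p → ℝ) :
    Qls n p x f (β + Pi.single j (empCorr x (f - x *ᵥ β) j)) =
      Qls n p x f β - empCorr x (f - x *ᵥ β) j ^ 2 := by
  rw [Qls_add_single x hxj]; ring

lemma empCorr_resid_eq_zero_of_le_add_single {j : Fin p} (hxj : meanSq (xᵀ j) = 1)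
    {β : Fin p → ℝ} (h : ∀ t, Qls n p x f β ≤ Qls n p x f (β + Pi.single j t)) :
    empCorr x (f - x *ᵥ β) j = 0 := by
  have := h (empCorr x (f - x *ᵥ β) j)
  rw [Qls_add_single_empCorr x f hxj] at this
  exact pow_eq_zero_iff two_ne_zero |>.mp (le_antisymm (by linarith) (sq_nonneg _))

lemma card_suppF_add_single_le (β : Fin p → ℝ) (j : Fin p) (t : ℝ) :
    (suppF (β + Pi.single j t)).card ≤ (suppF β).card + 1 :=
  (card_le_card (suppF_add_single_subset β j t)).trans (card_insert_le _ _)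

lemma abs_empCorr_resid_le_of_oracle {σ : ℝ} (hσ : 0 ≤ σ) {ck2 : ℕ → ℝ}
    (hck2 : ∀ k, ck2 k =
      sInf {r : ℝ | ∃ β : Fin p → ℝ, (suppF β).card ≤ k ∧ r = Qls n p x f β})
    {s : ℕ} (hopt : ck2 s + σ ^ 2 * s / n ≤ ck2 (s + 1) + σ ^ 2 * (s + 1 : ℕ) / n)
    {β0 : Fin p → ℝ} (hβ0s : (suppF β0).card ≤ s)
    (hβ0 : ∀ β : Fin p → ℝ, (suppF β).card ≤ s → Qls n p x f β0 ≤ Qls n p x f β)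
    {j : Fin p} (hxj : meanSq (xᵀ j) = 1) :
    |empCorr x (f - x *ᵥ β0) j| ≤ σ / √n := by
  have hck2s : Qls n p x f β0 ≤ ck2 s := by
    rw [hck2 s]
    exact le_csInf ⟨_, β0, hβ0s, rfl⟩ fun _ ⟨β, hβ, hr⟩ => hr ▸ hβ0 β hβ
  have hck2s1 : ck2 (s + 1) ≤ Qls n p x f β0 - empCorr x (f - x *ᵥ β0) j ^ 2 := by
    rw [hck2 (s + 1), ← Qls_add_single_empCorr x f hxj]
    refine csInf_le ⟨0, fun _ ⟨β, _, hr⟩ => hr ▸ Qls_nonneg x f β⟩ ⟨_, ?_, rfl⟩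
    exact (card_suppF_add_single_le _ j _).trans (by omega)
  have hsq : empCorr x (f - x *ᵥ β0) j ^ 2 ≤ σ ^ 2 / n := by
    push_cast at hopt
    have : σ ^ 2 * (s + 1 : ℝ) / n = σ ^ 2 * s / n + σ ^ 2 / n := by ring
    linarith
  calc |empCorr x (f - x *ᵥ β0) j| ≤ √(σ ^ 2 / n) := Real.abs_le_sqrt hsq
    _ = σ / √n := by rw [Real.sqrt_div' _ (Nat.cast_nonneg n), Real.sqrt_sq hσ]

lemma empCorr_resid_eq_zero_of_mem_suppF {s : ℕ} {β0 : Fin p → ℝ}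
    (hβ0s : (suppF β0).card ≤ s)
    (hβ0 : ∀ β : Fin p → ℝ, (suppF β).card ≤ s → Qls n p x f β0 ≤ Qls n p x f β)
    {j : Fin p} (hj : j ∈ suppF β0) (hxj : meanSq (xᵀ j) = 1) :
    empCorr x (f - x *ᵥ β0) j = 0 :=
  empCorr_resid_eq_zero_of_le_add_single x f hxj fun t => hβ0 _ <|
    (card_le_card (suppF_add_single_subset β0 j t)).trans (by rwa [insert_eq_of_mem hj])

end Oracle

theorem lasso_sup_norm_bound_orthogonal_design_general
    (n p : ℕ)
    (x : Fin n → Fin p → ℝ) (y f : Fin n → ℝ)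
    (hx : ∀ j, (n : ℝ)⁻¹ * ∑ i, x i j ^ 2 = 1)
    (σ : ℝ) (hσ : 0 < σ)
    -- the oracle program
    (ck2 : ℕ → ℝ)
    (hck2 : ∀ k, ck2 k = sInf {r : ℝ | ∃ β : Fin p → ℝ, (suppF β).card ≤ k ∧
      r = (n : ℝ)⁻¹ * ∑ i, (f i - ∑ j, x i j * β j) ^ 2})
    (s : ℕ) (hs1 : 1 ≤ s) (hsn : s < min p n)
    (hsopt : ∀ k ≤ min p n, ck2 s + σ ^ 2 * s / n ≤ ck2 k + σ ^ 2 * k / n)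
    (β0 : Fin p → ℝ) (hβ0s : (suppF β0).card ≤ s)
    (hβ0 : ∀ β : Fin p → ℝ, (suppF β).card ≤ s →
      (n : ℝ)⁻¹ * ∑ i, (f i - ∑ j, x i j * β0 j) ^ 2 ≤
        (n : ℝ)⁻¹ * ∑ i, (f i - ∑ j, x i j * β j) ^ 2)
    (cs : ℝ) (hcs : cs = Real.sqrt ((n : ℝ)⁻¹ * ∑ i, (f i - ∑ j, x i j * β0 j) ^ 2))
    -- lasso
    (c : ℝ) (hc : 1 < c) (cbar : ℝ) (hcbar : cbar = (c + 1) / (c - 1))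
    (S : Fin p → ℝ) (hS : S = fun j => (2 / n : ℝ) * ∑ i, (y i - f i) * x i j)
    (lam : ℝ) (hlam : 0 < lam) (hlamS : c * n * supNorm S ≤ lam)
    -- nearly orthogonal design
    (U : ℝ) (hU : 5 * cbar < U)
    (horth : ∀ j k : Fin p, j < k → |(n : ℝ)⁻¹ * ∑ i, x i j * x i k| ≤ 1 / (U * s))
    (βhat : Fin p → ℝ)
    (hβhat : ∀ β : Fin p → ℝ,
      Qls n p x y βhat + lam / n * l1 βhat ≤ Qls n p x y β + lam / n * l1 β) :
    (⨆ j, |βhat j - β0 j|) ≤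
      lam / n * ((U + cbar) / (U - 5 * cbar)) + min (σ / Real.sqrt n) cs +
        6 * cbar / (U - 5 * cbar) * (cs / Real.sqrt s) +
        4 * cbar / U * (n / lam) * (cs ^ 2 / s) := by
  have hn : 0 < n := by omega
  have : Nonempty (Fin p) := ⟨⟨0, by omega⟩⟩
  have hS' : S = (2 : ℝ) • empCorr x (y - f) := by
    subst hS; ext j
    change 2 / (n : ℝ) * ∑ i, (y i - f i) * x i j =
      2 * ((n : ℝ)⁻¹ * ∑ i, (y i - f i) * x i j)
    ring
  have hnoise := abs_empCorr_le_of_supNorm_le x (by linarith) hn (y - f) (hS' ▸ hlamS)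
  have hcorr : ∀ j ∈ suppF β0, empCorr x (f - x *ᵥ β0) j = 0 := fun j hj =>
    empCorr_resid_eq_zero_of_mem_suppF x f hβ0s hβ0 hj (hx j)
  refine ciSup_le fun j => ?_
  have hbound := IsLassoMin.abs_sub_le_of_nearlyOrthogonal hβhat hn hlam hx hc hcbar f hnoise
    (fun j hj => by simpa [suppF] using hj) hβ0s hcorr hs1 hU horth j
  have hσ' := abs_empCorr_resid_le_of_oracle x f hσ.le hck2 (hsopt (s + 1) (by omega)) hβ0s hβ0
    (hx j)
  have hcs' : |empCorr x (f - x *ᵥ β0) j| ≤ cs := hcs ▸ abs_empCorr_le x (hx j) _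
  have hQ : Qls n p x f β0 = cs ^ 2 := by
    rw [hcs]; exact (Real.sq_sqrt (Qls_nonneg x f β0)).symm
  have hcbar1 : 1 < cbar := hcbar ▸ one_lt_add_one_div_sub_one hc
  have h6 : 0 ≤ 6 * cbar / (U - 5 * cbar) * (cs / √s) :=
    mul_nonneg (div_nonneg (by linarith) (by linarith)) (by rw [hcs]; positivity)
  rw [hQ] at hbound
  linarith [le_min hσ' hcs']

/-- Theorem 3.2, part 2: sup-norm estimation error of lasso under a
nearly orthogonal design, with `β0, s` defined by the oracle program. -/
theorem lasso_sup_norm_bound_orthogonal_design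
    (n p : ℕ) (hn : 0 < n) (hp : 0 < p)
    (x : Fin n → Fin p → ℝ) (y f : Fin n → ℝ)
    (hx : ∀ j, (n : ℝ)⁻¹ * ∑ i, x i j ^ 2 = 1)
    (σ : ℝ) (hσ : 0 < σ)
    -- the oracle program
    (ck2 : ℕ → ℝ)
    (hck2 : ∀ k, ck2 k = sInf {r : ℝ | ∃ β : Fin p → ℝ, (suppF β).card ≤ k ∧
      r = (n : ℝ)⁻¹ * ∑ i, (f i - ∑ j, x i j * β j) ^ 2})
    (s : ℕ) (hs1 : 1 ≤ s) (hsn : s < min p n)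
    (hsopt : ∀ k ≤ min p n, ck2 s + σ ^ 2 * s / n ≤ ck2 k + σ ^ 2 * k / n)
    (hsmin : ∀ k < s, ck2 s + σ ^ 2 * s / n < ck2 k + σ ^ 2 * k / n)
    (β0 : Fin p → ℝ) (hβ0s : (suppF β0).card ≤ s)
    (hβ0 : ∀ β : Fin p → ℝ, (suppF β).card ≤ s →
      (n : ℝ)⁻¹ * ∑ i, (f i - ∑ j, x i j * β0 j) ^ 2 ≤
        (n : ℝ)⁻¹ * ∑ i, (f i - ∑ j, x i j * β j) ^ 2)
    (T : Finset (Fin p)) (hT : T = suppF β0) (hcard : T.card = s)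
    (cs : ℝ) (hcs : cs = Real.sqrt ((n : ℝ)⁻¹ * ∑ i, (f i - ∑ j, x i j * β0 j) ^ 2))
    -- lasso
    (c : ℝ) (hc : 1 < c) (cbar : ℝ) (hcbar : cbar = (c + 1) / (c - 1))
    (S : Fin p → ℝ) (hS : S = fun j => (2 / n : ℝ) * ∑ i, (y i - f i) * x i j)
    (lam : ℝ) (hlam : 0 < lam) (hlamS : c * n * supNorm S ≤ lam)
    -- nearly orthogonal design
    (U : ℝ) (hU : 5 * cbar < U)
    (horth : ∀ j k : Fin p, j < k → |(n : ℝ)⁻¹ * ∑ i, x i j * x i k| ≤ 1 / (U * s))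
    (βhat : Fin p → ℝ)
    (hβhat : ∀ β : Fin p → ℝ,
      Qls n p x y βhat + lam / n * l1 βhat ≤ Qls n p x y β + lam / n * l1 β) :
    (⨆ j, |βhat j - β0 j|) ≤
      lam / n * ((U + cbar) / (U - 5 * cbar)) + min (σ / Real.sqrt n) cs +
        6 * cbar / (U - 5 * cbar) * (cs / Real.sqrt s) +
        4 * cbar / U * (n / lam) * (cs ^ 2 / s) :=
  lasso_sup_norm_bound_orthogonal_design_general n p x y f hx σ hσ ck2 hck2 s hs1 hsn hsopt β0 hβ0s
    hβ0 cs hcs c hc cbar hcbar S hS lam hlam hlamS U hU horth βhat hβhat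
end
end

section
/- Lower bound on the restricted eigenvalue via the sup-norm deviation of the empirical Gram matrix (claim in the proof of Theorem 3.2): Let ρ := max_{1≤j,k≤p} |(E_n[x x'] − I)_{jk}| where E_n[x x'] is the p×p matrix with entries (1/n)∑_i x_{ij}x_{ik} and I the identity. Then for every C ≥ 0 with s(1+2C)ρ ≤ 1, the restricted eigenvalue satisfies κ(C) ≥ √(1 − s(1+2C)ρ). -/
open Finset MeasureTheory ProbabilityTheory

noncomputable section

/-!
Write `δ = u + v` with `u = δ_T`, `v = δ_{Tᶜ}`, and let `G = E_n[x x']`. Dropping the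
nonnegative term `v'Gv` gives `‖δ‖²_{2,n} ≥ u'Gu + 2 u'Gv`. Since `G - I` is entrywise bounded
by `ρ` and `u ⟂ v`, `u'Gu ≥ ‖u‖₂² - ρ ‖u‖₁²` and `u'Gv ≥ -ρ ‖u‖₁ ‖v‖₁`. Cauchy–Schwarz
`‖u‖₁² ≤ s ‖u‖₂²` and the cone condition `‖v‖₁ ≤ C ‖u‖₁` then give
`s ‖δ‖²_{2,n} ≥ (1 - s(1 + 2C)ρ) ‖u‖₁²`.
-/

open Matrix

section L1

variable {p : ℕ}

lemma l1_nonneg (v : Fin p → ℝ) : 0 ≤ l1 v :=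
  Finset.sum_nonneg fun j _ => abs_nonneg (v j)

lemma l1_eq_zero_iff {v : Fin p → ℝ} : l1 v = 0 ↔ v = 0 := by
  simp only [l1, Finset.sum_eq_zero_iff_of_nonneg fun j _ => abs_nonneg (v j), Finset.mem_univ,
    true_implies, abs_eq_zero, funext_iff, Pi.zero_apply]

lemma abs_dotProduct_mulVec_le {D : Matrix (Fin p) (Fin p) ℝ} {ρ : ℝ} (hD : ∀ j k, |D j k| ≤ ρ)
    (w z : Fin p → ℝ) : |w ⬝ᵥ D *ᵥ z| ≤ ρ * l1 w * l1 z := by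
  unfold dotProduct mulVec
  calc |∑ j, w j * ∑ k, D j k * z k| ≤ ∑ j, |w j| * ∑ k, |D j k| * |z k| := by
        refine (Finset.abs_sum_le_sum_abs _ _).trans (Finset.sum_le_sum fun j _ => ?_)
        rw [abs_mul]
        gcongr
        exact (Finset.abs_sum_le_sum_abs _ _).trans_eq (by simp only [abs_mul])
    _ ≤ ∑ j, |w j| * ∑ k, ρ * |z k| := by gcongr; exact hD _ _
    _ = ρ * l1 w * l1 z := by simp only [l1, ← Finset.mul_sum]; rw [← Finset.sum_mul]; ring

end L1

section Restriction

variable {p : ℕ} (A : Finset (Fin p)) (δ : Fin p → ℝ)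

lemma restr_add_restr_compl : restr A δ + restr Aᶜ δ = δ := by
  ext j
  by_cases hj : j ∈ A <;> simp [restr, hj]

lemma dotProduct_restr_restr_compl : restr A δ ⬝ᵥ restr Aᶜ δ = 0 :=
  Finset.sum_eq_zero fun j _ => by by_cases hj : j ∈ A <;> simp [restr, hj]

lemma sq_l1_restr_le : l1 (restr A δ) ^ 2 ≤ A.card * (restr A δ ⬝ᵥ restr A δ) := by
  have hl1 : l1 (restr A δ) = ∑ j ∈ A, |δ j| := by
    simp only [l1, restr, apply_ite, abs_zero, Finset.sum_ite_mem, Finset.univ_inter]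
  have hdot : restr A δ ⬝ᵥ restr A δ = ∑ j ∈ A, |δ j| ^ 2 := by
    simp [dotProduct, restr, Finset.sum_ite_mem, sq]
  rw [hl1, hdot]
  exact sq_sum_le_card_mul_sum_sq

lemma l1_restr_pos_of_mem_cone {C : ℝ} (hδ : δ ≠ 0)
    (hcone : l1 (restr Aᶜ δ) ≤ C * l1 (restr A δ)) : 0 < l1 (restr A δ) := by
  refine (l1_nonneg _).lt_of_ne fun h => hδ ?_
  have hcompl : restr Aᶜ δ = 0 :=
    l1_eq_zero_iff.mp ((hcone.trans_eq (by rw [← h, mul_zero])).antisymm (l1_nonneg _))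
  rw [← restr_add_restr_compl A δ, ← l1_eq_zero_iff.mp h.symm, hcompl, add_zero]

end Restriction

section Gram

variable {n p : ℕ} (x : Fin n → Fin p → ℝ)

def empiricalGram : Matrix (Fin p) (Fin p) ℝ :=
  Matrix.of fun j k => (n : ℝ)⁻¹ * ∑ i, x i j * x i k

lemma dotProduct_empiricalGram_mulVec (w z : Fin p → ℝ) :
    w ⬝ᵥ empiricalGram x *ᵥ z = (n : ℝ)⁻¹ * ((Matrix.of x *ᵥ w) ⬝ᵥ (Matrix.of x *ᵥ z)) := by
  have hG : empiricalGram x = (n : ℝ)⁻¹ • ((Matrix.of x)ᵀ * Matrix.of x) := by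
    ext j k
    simp [empiricalGram, mul_apply]
  rw [hG, smul_mulVec, ← mulVec_mulVec, dotProduct_smul, dotProduct_mulVec, vecMul_transpose,
    smul_eq_mul]

lemma predNorm_sq (δ : Fin p → ℝ) : predNorm n p x δ ^ 2 = δ ⬝ᵥ empiricalGram x *ᵥ δ := by
  rw [predNorm, Real.sq_sqrt (by positivity), dotProduct_empiricalGram_mulVec]
  simp only [dotProduct, mulVec, of_apply, sq]

lemma dotProduct_empiricalGram_add_le (u v : Fin p → ℝ) :
    u ⬝ᵥ empiricalGram x *ᵥ u + 2 * (u ⬝ᵥ empiricalGram x *ᵥ v) ≤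
      (u + v) ⬝ᵥ empiricalGram x *ᵥ (u + v) := by
  have hv : 0 ≤ v ⬝ᵥ empiricalGram x *ᵥ v := predNorm_sq x v ▸ sq_nonneg _
  simp only [dotProduct_empiricalGram_mulVec, mulVec_add, dotProduct_add, add_dotProduct] at hv ⊢
  rw [dotProduct_comm (Matrix.of x *ᵥ v) (Matrix.of x *ᵥ u)]
  linarith

variable {x} {ρ : ℝ} (hρ : ∀ j k, |(empiricalGram x - 1) j k| ≤ ρ)
include hρ

lemma sub_le_dotProduct_empiricalGram_mulVec (w z : Fin p → ℝ) :
    w ⬝ᵥ z - ρ * l1 w * l1 z ≤ w ⬝ᵥ empiricalGram x *ᵥ z := by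
  have hsplit : w ⬝ᵥ empiricalGram x *ᵥ z = w ⬝ᵥ z + w ⬝ᵥ (empiricalGram x - 1) *ᵥ z := by
    rw [sub_mulVec, one_mulVec, dotProduct_sub]
    ring
  rw [hsplit]
  linarith [neg_abs_le (w ⬝ᵥ (empiricalGram x - 1) *ᵥ z), abs_dotProduct_mulVec_le hρ w z]

lemma sub_le_sq_predNorm_add {u v : Fin p → ℝ} (huv : u ⬝ᵥ v = 0) :
    u ⬝ᵥ u - ρ * l1 u * (l1 u + 2 * l1 v) ≤ predNorm n p x (u + v) ^ 2 := by
  rw [predNorm_sq]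
  have huu := sub_le_dotProduct_empiricalGram_mulVec hρ u u
  have huv' := sub_le_dotProduct_empiricalGram_mulVec hρ u v
  linarith [dotProduct_empiricalGram_add_le x u v]

end Gram

lemma le_kappaRE {n p : ℕ} (x : Fin n → Fin p → ℝ) {T : Finset (Fin p)} (hT : T.Nonempty)
    {C : ℝ} (hC : 0 ≤ C) {c : ℝ}
    (h : ∀ δ, δ ≠ 0 → l1 (restr Tᶜ δ) ≤ C * l1 (restr T δ) →
      c ≤ Real.sqrt T.card * predNorm n p x δ / l1 (restr T δ)) :
    c ≤ kappaRE n p x T C := by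
  obtain ⟨j₀, hj₀⟩ := hT
  refine le_csInf ⟨_, Pi.single j₀ 1, ?_, ?_, rfl⟩ ?_
  · simp
  · have : restr Tᶜ (Pi.single j₀ (1 : ℝ)) = 0 := by
      ext j
      by_cases hj : j = j₀ <;> simp_all [restr]
    rw [this, l1_eq_zero_iff.mpr rfl]
    exact mul_nonneg hC (l1_nonneg _)
  · rintro r ⟨δ, hδ, hcone, rfl⟩
    exact h δ hδ hcone

theorem restricted_eigenvalue_lower_bound_gram_deviation_general
    (n p : ℕ)
    (x : Fin n → Fin p → ℝ)
    (T : Finset (Fin p)) (s : ℕ) (hs : s = T.card) (hs1 : 1 ≤ s)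
    (ρ : ℝ)
    (hρ : ρ = ⨆ j : Fin p, ⨆ k : Fin p,
      |(n : ℝ)⁻¹ * (∑ i, x i j * x i k) - (if j = k then 1 else 0)|)
    (C : ℝ) (hC : 0 ≤ C) :
    Real.sqrt (1 - s * (1 + 2 * C) * ρ) ≤ kappaRE n p x T C := by
  subst hs
  have hT : T.Nonempty := Finset.card_pos.mp hs1
  have hdev : ∀ j k, |(empiricalGram x - 1) j k| ≤ ρ := fun j k =>
    hρ ▸ (Finite.le_ciSup _ k).trans
      (Finite.le_ciSup (fun j => ⨆ k, |(empiricalGram x - 1) j k|) j)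
  have hρ0 : 0 ≤ ρ := (abs_nonneg _).trans (hdev hT.choose hT.choose)
  refine le_kappaRE x hT hC fun δ hδ hcone => ?_
  set L := l1 (restr T δ)
  have hL : 0 < L := l1_restr_pos_of_mem_cone T δ hδ hcone
  have hquad := sub_le_sq_predNorm_add hdev (dotProduct_restr_restr_compl T δ)
  rw [restr_add_restr_compl] at hquad
  have hkey : (1 - T.card * (1 + 2 * C) * ρ) * L ^ 2 ≤ T.card * predNorm n p x δ ^ 2 := by
    nlinarith [sq_l1_restr_le T δ, mul_le_mul_of_nonneg_left hcone (mul_nonneg hρ0 hL.le)]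
  refine Real.sqrt_le_iff.mpr ⟨by unfold predNorm; positivity, ?_⟩
  rw [div_pow, mul_pow, Real.sq_sqrt (Nat.cast_nonneg _), le_div_iff₀ (by positivity)]
  exact hkey

/-- claim in the proof of Theorem 3.2: lower bound on the restricted
eigenvalue via the sup-norm deviation of the empirical Gram matrix from the identity. -/
theorem restricted_eigenvalue_lower_bound_gram_deviation
    (n p : ℕ) (hn : 0 < n) (hp : 0 < p)
    (x : Fin n → Fin p → ℝ)
    (hx : ∀ j, (n : ℝ)⁻¹ * ∑ i, x i j ^ 2 = 1)
    (T : Finset (Fin p)) (s : ℕ) (hs : s = T.card) (hs1 : 1 ≤ s)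
    (ρ : ℝ)
    (hρ : ρ = ⨆ j : Fin p, ⨆ k : Fin p,
      |(n : ℝ)⁻¹ * (∑ i, x i j * x i k) - (if j = k then 1 else 0)|)
    (C : ℝ) (hC : 0 ≤ C) (hsmall : (s : ℝ) * (1 + 2 * C) * ρ ≤ 1) :
    Real.sqrt (1 - s * (1 + 2 * C) * ρ) ≤ kappaRE n p x T C :=
  restricted_eigenvalue_lower_bound_gram_deviation_general n p x T s hs hs1 ρ hρ C hC
end
end
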